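/- arXiv:2410.06583 — 4 statements merged into one kernel-verified Lean document; each statement's English description precedes it below -/
import Mathlib

section
/- For any 1-consistent randomized algorithm on the hardness instance, its overall expected competitive ratio ρ satisfies ρ < 1/3 + (2/3)·(ε + (1−ε)·(1/s + 1/(k−1))). -/
open Finset

/-- Value of candidate `j` in row `i` of the hardness construction (rows indexed `1..r`):
row 1 is `(s, 1, 1)`; for `m ≥ 1`, rows `2m` and `2m+1` contain `s^{m+1}, s^{m+2}` in
columns 2,3, arranged according to the parity of `m`. -/
noncomputable def rowVal (s : ℝ) (i : ℕ) : Fin 3 → ℝ :=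
  if i = 1 then ![s, 1, 1]
  else if (i % 2 = 0 ↔ (i / 2) % 2 = 1) then ![s, s ^ (i / 2 + 1), s ^ (i / 2 + 2)]
  else ![s, s ^ (i / 2 + 2), s ^ (i / 2 + 1)]

/-- Probability that row `i` is realized: row 1 with probability `ε`, each of the other
`r - 1` rows with probability `(1-ε)/(r-1)`. -/
noncomputable def rowProb (ε : ℝ) (r : ℕ) (i : ℕ) : ℝ :=
  if i = 1 then ε else (1 - ε) / ((r : ℝ) - 1)

/-- The competitive ratio obtained by the randomized algorithm `(a₁, a₂)` on value
vector `v` when the arrival order is `π` (candidate `π t` arrives at time `t`),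
averaged over the algorithm's internal randomness. -/
noncomputable def ratio (a₁ : Fin 3 × ℝ → ℝ) (a₂ : (Fin 3 × ℝ) × (Fin 3 × ℝ) → ℝ)
    (v : Fin 3 → ℝ) (π : Equiv.Perm (Fin 3)) : ℝ :=
  let x : Fin 3 → ℝ := fun t => v (π t)
  let M : ℝ := max (v 0) (max (v 1) (v 2))
  let p1 := a₁ (π 0, x 0)
  let p2 := a₂ ((π 0, x 0), (π 1, x 1))
  p1 * (x 0 / M) + (1 - p1) * (p2 * (x 1 / M) + (1 - p2) * (x 2 / M))

/-- The overall expected competitive ratio `ρ`: expectation over the random row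
`I ∈ {1, …, r}` and the uniformly random arrival order `π`. -/
noncomputable def rho (s ε : ℝ) (r : ℕ) (a₁ : Fin 3 × ℝ → ℝ)
    (a₂ : (Fin 3 × ℝ) × (Fin 3 × ℝ) → ℝ) : ℝ :=
  ∑ i ∈ Finset.Icc 1 r, rowProb ε r i *
    ((1 / 6) * ∑ π : Equiv.Perm (Fin 3), ratio a₁ a₂ (rowVal s i) π)

/-- The algorithm is 1-consistent: its expected competitive ratio conditional on
row 1 (the predicted row) being realized equals 1. -/
noncomputable def Consistent (s : ℝ) (a₁ : Fin 3 × ℝ → ℝ)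
    (a₂ : (Fin 3 × ℝ) × (Fin 3 × ℝ) → ℝ) : Prop :=
  (1 / 6) * ∑ π : Equiv.Perm (Fin 3), ratio a₁ a₂ (rowVal s 1) π = 1

section Aux

lemma perm3_sum (f : Equiv.Perm (Fin 3) → ℝ) : ∑ π : Equiv.Perm (Fin 3), f π =
    f 1 + f (Equiv.swap 0 1) + f (Equiv.swap 0 2) + f (Equiv.swap 1 2)
    + f (Equiv.swap 0 1 * Equiv.swap 1 2) + f (Equiv.swap 0 2 * Equiv.swap 1 2) := by
  rw [show (Finset.univ : Finset (Equiv.Perm (Fin 3))) =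
    {1, Equiv.swap 0 1, Equiv.swap 0 2, Equiv.swap 1 2,
     Equiv.swap 0 1 * Equiv.swap 1 2, Equiv.swap 0 2 * Equiv.swap 1 2} from by decide]
  rw [Finset.sum_insert (by decide), Finset.sum_insert (by decide),
      Finset.sum_insert (by decide), Finset.sum_insert (by decide),
      Finset.sum_insert (by decide), Finset.sum_singleton]
  ring

lemma ratio_apply (a₁ : Fin 3 × ℝ → ℝ) (a₂ : (Fin 3 × ℝ) × (Fin 3 × ℝ) → ℝ)
    (v : Fin 3 → ℝ) (π : Equiv.Perm (Fin 3)) (i j l : Fin 3)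
    (h0 : π 0 = i) (h1 : π 1 = j) (h2 : π 2 = l) :
    ratio a₁ a₂ v π =
      a₁ (i, v i) * (v i / max (v 0) (max (v 1) (v 2))) +
      (1 - a₁ (i, v i)) * (a₂ ((i, v i), (j, v j)) * (v j / max (v 0) (max (v 1) (v 2))) +
        (1 - a₂ ((i, v i), (j, v j))) * (v l / max (v 0) (max (v 1) (v 2)))) := by
  simp only [ratio, h0, h1, h2]

lemma conv_bound (p1 p2 r1 r2 r3 c1 c : ℝ) (hp1 : 0 ≤ p1) (hp1' : p1 ≤ 1)
    (hp2 : 0 ≤ p2) (hp2' : p2 ≤ 1) (h1 : r1 ≤ c1) (h2 : r2 ≤ c) (h3 : r3 ≤ c) :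
    p1 * r1 + (1 - p1) * (p2 * r2 + (1 - p2) * r3) ≤ p1 * c1 + (1 - p1) * c := by
  nlinarith [mul_le_mul_of_nonneg_left h2 hp2, mul_le_mul_of_nonneg_left h3 (by linarith : (0:ℝ) ≤ 1 - p2),
    mul_le_mul_of_nonneg_left h1 hp1]

lemma a1_eq_one (s : ℝ) (hs : 1 < s) (a₁ : Fin 3 × ℝ → ℝ)
    (a₂ : (Fin 3 × ℝ) × (Fin 3 × ℝ) → ℝ)
    (ha₁ : ∀ o, a₁ o ∈ Set.Icc (0 : ℝ) 1) (ha₂ : ∀ o, a₂ o ∈ Set.Icc (0 : ℝ) 1)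
    (hcons : Consistent s a₁ a₂) : a₁ (0, s) = 1 := by
  have hs0 : (0:ℝ) < s := by linarith
  have hv : rowVal s 1 = ![s, 1, 1] := by simp [rowVal]
  have hM : max (rowVal s 1 0) (max (rowVal s 1 1) (rowVal s 1 2)) = s := by
    simp [hv]; exact le_of_lt hs
  have hle : ∀ π ∈ (Finset.univ : Finset (Equiv.Perm (Fin 3))),
      ratio a₁ a₂ (rowVal s 1) π ≤ (1:ℝ) := by
    intro π _
    have hvals : ∀ t : Fin 3, rowVal s 1 t / s ≤ 1 := by
      intro t
      fin_cases t <;> simp [hv] <;>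
        first
          | exact le_of_eq (div_self (ne_of_gt hs0))
          | exact inv_le_one_of_one_le₀ (le_of_lt hs)
    have := conv_bound (a₁ (π 0, rowVal s 1 (π 0))) (a₂ ((π 0, rowVal s 1 (π 0)), (π 1, rowVal s 1 (π 1))))
      (rowVal s 1 (π 0) / s) (rowVal s 1 (π 1) / s) (rowVal s 1 (π 2) / s) 1 1
      (ha₁ _).1 (ha₁ _).2 (ha₂ _).1 (ha₂ _).2 (hvals _) (hvals _) (hvals _)
    calc ratio a₁ a₂ (rowVal s 1) π
        = a₁ (π 0, rowVal s 1 (π 0)) * (rowVal s 1 (π 0) / s) +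
          (1 - a₁ (π 0, rowVal s 1 (π 0))) *
            (a₂ ((π 0, rowVal s 1 (π 0)), (π 1, rowVal s 1 (π 1))) * (rowVal s 1 (π 1) / s) +
             (1 - a₂ ((π 0, rowVal s 1 (π 0)), (π 1, rowVal s 1 (π 1)))) * (rowVal s 1 (π 2) / s)) := by
          rw [ratio_apply a₁ a₂ (rowVal s 1) π (π 0) (π 1) (π 2) rfl rfl rfl, hM]
      _ ≤ a₁ (π 0, rowVal s 1 (π 0)) * 1 + (1 - a₁ (π 0, rowVal s 1 (π 0))) * 1 := this
      _ = 1 := by ring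
  have hsum : ∑ π : Equiv.Perm (Fin 3), ratio a₁ a₂ (rowVal s 1) π = 6 := by
    have := hcons
    unfold Consistent at this
    linarith
  have hsum1 : ∑ π : Equiv.Perm (Fin 3), ratio a₁ a₂ (rowVal s 1) π
      = ∑ _π : Equiv.Perm (Fin 3), (1:ℝ) := by
    rw [hsum, Finset.sum_const, Finset.card_univ, Fintype.card_perm]
    norm_num [Nat.factorial]
  have heach := (Finset.sum_eq_sum_iff_of_le hle).1 hsum1 1 (Finset.mem_univ 1)
  -- ratio at the identity permutation equals 1
  have hid : ratio a₁ a₂ (rowVal s 1) 1 =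
      a₁ (0, s) * 1 + (1 - a₁ (0, s)) *
        (a₂ ((0, s), (1, 1)) * (1 / s) + (1 - a₂ ((0, s), (1, 1))) * (1 / s)) := by
    rw [ratio_apply a₁ a₂ (rowVal s 1) 1 0 1 2 rfl rfl rfl, hM]
    simp [hv, div_self (ne_of_gt hs0)]
  rw [hid] at heach
  have h1s : 1 / s < 1 := by rw [div_lt_one hs0]; exact hs
  have hp2 := ha₂ ((0, s), (1, 1))
  nlinarith [(ha₁ (0, s)).2, (ha₁ (0, s)).1]

lemma row_bound_AB (s A B : ℝ) (hs : 1 < s) (hsA : s ≤ A) (hAB : A * s = B)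
    (a₁ : Fin 3 × ℝ → ℝ) (a₂ : (Fin 3 × ℝ) × (Fin 3 × ℝ) → ℝ)
    (ha₁ : ∀ o, a₁ o ∈ Set.Icc (0 : ℝ) 1) (ha₂ : ∀ o, a₂ o ∈ Set.Icc (0 : ℝ) 1)
    (h0 : a₁ (0, s) = 1) :
    ∑ π : Equiv.Perm (Fin 3), ratio a₁ a₂ ![s, A, B] π ≤
      6 / s + (1 - 1 / s) * (2 * a₁ (2, B) + 2 * (1 - a₁ (1, A))) := by
  have hs0 : (0:ℝ) < s := by linarith
  have hA0 : (0:ℝ) < A := by linarith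
  have hB0 : (0:ℝ) < B := by nlinarith
  have hsB : s < B := by nlinarith
  have hAultB : A < B := by nlinarith
  have hM : max (![s, A, B] 0) (max (![s, A, B] 1) (![s, A, B] 2)) = B := by
    simp [max_eq_right, le_of_lt hAultB, le_of_lt hsB]
  have hADB : A / B = 1 / s := by
    rw [div_eq_div_iff hB0.ne' hs0.ne', one_mul, hAB]
  have hsDB : s / B ≤ 1 / s := by
    rw [div_le_div_iff₀ hB0 hs0]
    nlinarith
  have hBDB : B / B = 1 := div_self (ne_of_gt hB0)
  have hsDB1 : s / B ≤ 1 := le_trans hsDB (by rw [div_le_one hs0]; linarith)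
  have hADB1 : A / B ≤ 1 := by rw [hADB, div_le_one hs0]; linarith
  have h1s1 : 1 / s ≤ 1 := by rw [div_le_one hs0]; linarith
  set α := a₁ (1, A) with hα
  set β := a₁ (2, B) with hβ
  rw [perm3_sum]
  have T1 : ratio a₁ a₂ ![s, A, B] 1 ≤ 1 / s := by
    rw [ratio_apply a₁ a₂ _ 1 0 1 2 rfl rfl rfl, hM]
    simp only [Matrix.cons_val_zero, Matrix.cons_val_one, Matrix.head_cons,
      Matrix.cons_val_two, Matrix.tail_cons, h0]
    nlinarith [(ha₂ ((0, s), (1, A))).1, (ha₂ ((0, s), (1, A))).2]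
  have T2 : ratio a₁ a₂ ![s, A, B] (Equiv.swap 1 2) ≤ 1 / s := by
    rw [ratio_apply a₁ a₂ _ _ 0 2 1 (by decide) (by decide) (by decide), hM]
    simp only [Matrix.cons_val_zero, Matrix.cons_val_one, Matrix.head_cons,
      Matrix.cons_val_two, Matrix.tail_cons, h0]
    nlinarith [(ha₂ ((0, s), (2, B))).1, (ha₂ ((0, s), (2, B))).2]
  have T3 : ratio a₁ a₂ ![s, A, B] (Equiv.swap 0 1) ≤ α * (1/s) + (1 - α) * 1 := by
    rw [ratio_apply a₁ a₂ _ _ 1 0 2 (by decide) (by decide) (by decide), hM]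
    simp only [Matrix.cons_val_zero, Matrix.cons_val_one, Matrix.head_cons,
      Matrix.cons_val_two, Matrix.tail_cons]
    exact conv_bound _ _ _ _ _ _ _ (ha₁ _).1 (ha₁ _).2 (ha₂ _).1 (ha₂ _).2
      (le_of_eq hADB) hsDB1 (le_of_eq hBDB)
  have T4 : ratio a₁ a₂ ![s, A, B] (Equiv.swap 0 1 * Equiv.swap 1 2) ≤ α * (1/s) + (1 - α) * 1 := by
    rw [ratio_apply a₁ a₂ _ _ 1 2 0 (by decide) (by decide) (by decide), hM]
    simp only [Matrix.cons_val_zero, Matrix.cons_val_one, Matrix.head_cons,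
      Matrix.cons_val_two, Matrix.tail_cons]
    exact conv_bound _ _ _ _ _ _ _ (ha₁ _).1 (ha₁ _).2 (ha₂ _).1 (ha₂ _).2
      (le_of_eq hADB) (le_of_eq hBDB) hsDB1
  have T5 : ratio a₁ a₂ ![s, A, B] (Equiv.swap 0 2) ≤ β * 1 + (1 - β) * (1/s) := by
    rw [ratio_apply a₁ a₂ _ _ 2 1 0 (by decide) (by decide) (by decide), hM]
    simp only [Matrix.cons_val_zero, Matrix.cons_val_one, Matrix.head_cons,
      Matrix.cons_val_two, Matrix.tail_cons]
    exact conv_bound _ _ _ _ _ _ _ (ha₁ _).1 (ha₁ _).2 (ha₂ _).1 (ha₂ _).2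
      (le_of_eq hBDB) (le_of_eq hADB) hsDB
  have T6 : ratio a₁ a₂ ![s, A, B] (Equiv.swap 0 2 * Equiv.swap 1 2) ≤ β * 1 + (1 - β) * (1/s) := by
    rw [ratio_apply a₁ a₂ _ _ 2 0 1 (by decide) (by decide) (by decide), hM]
    simp only [Matrix.cons_val_zero, Matrix.cons_val_one, Matrix.head_cons,
      Matrix.cons_val_two, Matrix.tail_cons]
    exact conv_bound _ _ _ _ _ _ _ (ha₁ _).1 (ha₁ _).2 (ha₂ _).1 (ha₂ _).2
      (le_of_eq hBDB) hsDB (le_of_eq hADB)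
  have : (1:ℝ)/s + 1/s + (α * (1/s) + (1 - α) * 1) + (α * (1/s) + (1 - α) * 1)
      + (β * 1 + (1 - β) * (1/s)) + (β * 1 + (1 - β) * (1/s))
      = 6 / s + (1 - 1 / s) * (2 * β + 2 * (1 - α)) := by ring
  linarith

lemma row_bound_BA (s A B : ℝ) (hs : 1 < s) (hsA : s ≤ A) (hAB : A * s = B)
    (a₁ : Fin 3 × ℝ → ℝ) (a₂ : (Fin 3 × ℝ) × (Fin 3 × ℝ) → ℝ)
    (ha₁ : ∀ o, a₁ o ∈ Set.Icc (0 : ℝ) 1) (ha₂ : ∀ o, a₂ o ∈ Set.Icc (0 : ℝ) 1)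
    (h0 : a₁ (0, s) = 1) :
    ∑ π : Equiv.Perm (Fin 3), ratio a₁ a₂ ![s, B, A] π ≤
      6 / s + (1 - 1 / s) * (2 * a₁ (1, B) + 2 * (1 - a₁ (2, A))) := by
  have hs0 : (0:ℝ) < s := by linarith
  have hA0 : (0:ℝ) < A := by linarith
  have hB0 : (0:ℝ) < B := by nlinarith
  have hsB : s < B := by nlinarith
  have hAultB : A < B := by nlinarith
  have hM : max (![s, B, A] 0) (max (![s, B, A] 1) (![s, B, A] 2)) = B := by
    simp [max_eq_left, le_of_lt hAultB, le_of_lt hsB]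
  have hADB : A / B = 1 / s := by
    rw [div_eq_div_iff hB0.ne' hs0.ne', one_mul, hAB]
  have hsDB : s / B ≤ 1 / s := by
    rw [div_le_div_iff₀ hB0 hs0]
    nlinarith
  have hBDB : B / B = 1 := div_self (ne_of_gt hB0)
  have hsDB1 : s / B ≤ 1 := le_trans hsDB (by rw [div_le_one hs0]; linarith)
  have hADB1 : A / B ≤ 1 := by rw [hADB, div_le_one hs0]; linarith
  have h1s1 : 1 / s ≤ 1 := by rw [div_le_one hs0]; linarith
  set α := a₁ (2, A) with hα
  set β := a₁ (1, B) with hβ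
  rw [perm3_sum]
  have T1 : ratio a₁ a₂ ![s, B, A] 1 ≤ 1 / s := by
    rw [ratio_apply a₁ a₂ _ 1 0 1 2 rfl rfl rfl, hM]
    simp only [Matrix.cons_val_zero, Matrix.cons_val_one, Matrix.head_cons,
      Matrix.cons_val_two, Matrix.tail_cons, h0]
    nlinarith [(ha₂ ((0, s), (1, B))).1, (ha₂ ((0, s), (1, B))).2]
  have T2 : ratio a₁ a₂ ![s, B, A] (Equiv.swap 1 2) ≤ 1 / s := by
    rw [ratio_apply a₁ a₂ _ _ 0 2 1 (by decide) (by decide) (by decide), hM]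
    simp only [Matrix.cons_val_zero, Matrix.cons_val_one, Matrix.head_cons,
      Matrix.cons_val_two, Matrix.tail_cons, h0]
    nlinarith [(ha₂ ((0, s), (2, A))).1, (ha₂ ((0, s), (2, A))).2]
  have T3 : ratio a₁ a₂ ![s, B, A] (Equiv.swap 0 1) ≤ β * 1 + (1 - β) * (1/s) := by
    rw [ratio_apply a₁ a₂ _ _ 1 0 2 (by decide) (by decide) (by decide), hM]
    simp only [Matrix.cons_val_zero, Matrix.cons_val_one, Matrix.head_cons,
      Matrix.cons_val_two, Matrix.tail_cons]
    exact conv_bound _ _ _ _ _ _ _ (ha₁ _).1 (ha₁ _).2 (ha₂ _).1 (ha₂ _).2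
      (le_of_eq hBDB) hsDB (le_of_eq hADB)
  have T4 : ratio a₁ a₂ ![s, B, A] (Equiv.swap 0 1 * Equiv.swap 1 2) ≤ β * 1 + (1 - β) * (1/s) := by
    rw [ratio_apply a₁ a₂ _ _ 1 2 0 (by decide) (by decide) (by decide), hM]
    simp only [Matrix.cons_val_zero, Matrix.cons_val_one, Matrix.head_cons,
      Matrix.cons_val_two, Matrix.tail_cons]
    exact conv_bound _ _ _ _ _ _ _ (ha₁ _).1 (ha₁ _).2 (ha₂ _).1 (ha₂ _).2
      (le_of_eq hBDB) (le_of_eq hADB) hsDB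
  have T5 : ratio a₁ a₂ ![s, B, A] (Equiv.swap 0 2) ≤ α * (1/s) + (1 - α) * 1 := by
    rw [ratio_apply a₁ a₂ _ _ 2 1 0 (by decide) (by decide) (by decide), hM]
    simp only [Matrix.cons_val_zero, Matrix.cons_val_one, Matrix.head_cons,
      Matrix.cons_val_two, Matrix.tail_cons]
    exact conv_bound _ _ _ _ _ _ _ (ha₁ _).1 (ha₁ _).2 (ha₂ _).1 (ha₂ _).2
      (le_of_eq hADB) (le_of_eq hBDB) hsDB1
  have T6 : ratio a₁ a₂ ![s, B, A] (Equiv.swap 0 2 * Equiv.swap 1 2) ≤ α * (1/s) + (1 - α) * 1 := by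
    rw [ratio_apply a₁ a₂ _ _ 2 0 1 (by decide) (by decide) (by decide), hM]
    simp only [Matrix.cons_val_zero, Matrix.cons_val_one, Matrix.head_cons,
      Matrix.cons_val_two, Matrix.tail_cons]
    exact conv_bound _ _ _ _ _ _ _ (ha₁ _).1 (ha₁ _).2 (ha₂ _).1 (ha₂ _).2
      (le_of_eq hADB) hsDB1 (le_of_eq hBDB)
  have : (1:ℝ)/s + 1/s + (β * 1 + (1 - β) * (1/s)) + (β * 1 + (1 - β) * (1/s))
      + (α * (1/s) + (1 - α) * 1) + (α * (1/s) + (1 - α) * 1)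
      = 6 / s + (1 - 1 / s) * (2 * β + 2 * (1 - α)) := by ring
  linarith
end Aux

lemma sum_pair (g : ℕ → ℝ) (n : ℕ) :
    ∑ i ∈ Finset.Icc 2 (2*n+1), g i = ∑ m ∈ Finset.Icc 1 n, (g (2*m) + g (2*m+1)) := by
  induction n with
  | zero =>
    rw [Finset.Icc_eq_empty (by omega), Finset.Icc_eq_empty (by omega)]
    simp
  | succ n ih =>
    have h1 : 2*(n+1)+1 = (2*n+1) + 1 + 1 := by ring
    rw [h1, Finset.sum_Icc_succ_top (by omega) g, Finset.sum_Icc_succ_top (by omega) g, ih,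
        Finset.sum_Icc_succ_top (by omega) (fun m => g (2*m) + g (2*m+1))]
    have e1 : 2*n+1+1 = 2*(n+1) := by ring
    have e2 : 2*n+1+1+1 = 2*(n+1)+1 := by ring
    rw [e1]
    ring

lemma tele (h : ℕ → ℝ) (n : ℕ) :
    ∑ m ∈ Finset.Icc 1 n, (h (m+1) - h m) = h (n+1) - h 1 := by
  induction n with
  | zero => rw [Finset.Icc_eq_empty (by omega)]; simp
  | succ n ih => rw [Finset.sum_Icc_succ_top (by omega), ih]; ring

lemma pair_bound (s : ℝ) (hs : 1 < s) (m : ℕ) (hm : 1 ≤ m)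
    (a₁ : Fin 3 × ℝ → ℝ) (a₂ : (Fin 3 × ℝ) × (Fin 3 × ℝ) → ℝ)
    (ha₁ : ∀ o, a₁ o ∈ Set.Icc (0 : ℝ) 1) (ha₂ : ∀ o, a₂ o ∈ Set.Icc (0 : ℝ) 1)
    (h0 : a₁ (0, s) = 1) :
    (∑ π : Equiv.Perm (Fin 3), ratio a₁ a₂ (rowVal s (2*m)) π)
      + (∑ π : Equiv.Perm (Fin 3), ratio a₁ a₂ (rowVal s (2*m+1)) π) ≤
      12/s + (1 - 1/s) * (2*(a₁ (1, s^(m+2)) + a₁ (2, s^(m+2))) + 4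
        - 2*(a₁ (1, s^(m+1)) + a₁ (2, s^(m+1)))) := by
  have hsA : s ≤ s^(m+1) := by
    calc s = s^1 := (pow_one s).symm
    _ ≤ s^(m+1) := pow_le_pow_right₀ (le_of_lt hs) (by omega)
  have hAB : s^(m+1) * s = s^(m+2) := (pow_succ s (m+1)).symm
  have hA := row_bound_AB s (s^(m+1)) (s^(m+2)) hs hsA hAB a₁ a₂ ha₁ ha₂ h0
  have hB := row_bound_BA s (s^(m+1)) (s^(m+2)) hs hsA hAB a₁ a₂ ha₁ ha₂ h0
  have hdiv : 2*m/2 = m := by omega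
  have hdiv' : (2*m+1)/2 = m := by omega
  by_cases h : m % 2 = 1
  · have e1 : rowVal s (2*m) = ![s, s^(m+1), s^(m+2)] := by
      unfold rowVal
      rw [if_neg (by omega : ¬(2*m = 1)),
        if_pos (by omega : ((2*m) % 2 = 0 ↔ (2*m/2) % 2 = 1)), hdiv]
    have e2 : rowVal s (2*m+1) = ![s, s^(m+2), s^(m+1)] := by
      unfold rowVal
      rw [if_neg (by omega : ¬(2*m+1 = 1)),
        if_neg (by omega : ¬((2*m+1) % 2 = 0 ↔ ((2*m+1)/2) % 2 = 1)), hdiv']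
    rw [e1, e2]
    have hr : (6/s + (1 - 1/s) * (2 * a₁ (2, s^(m+2)) + 2 * (1 - a₁ (1, s^(m+1)))))
        + (6/s + (1 - 1/s) * (2 * a₁ (1, s^(m+2)) + 2 * (1 - a₁ (2, s^(m+1)))))
        = 12/s + (1 - 1/s) * (2*(a₁ (1, s^(m+2)) + a₁ (2, s^(m+2))) + 4
          - 2*(a₁ (1, s^(m+1)) + a₁ (2, s^(m+1)))) := by ring
    linarith
  · have e1 : rowVal s (2*m) = ![s, s^(m+2), s^(m+1)] := by
      unfold rowVal
      rw [if_neg (by omega : ¬(2*m = 1)),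
        if_neg (by omega : ¬((2*m) % 2 = 0 ↔ (2*m/2) % 2 = 1)), hdiv]
    have e2 : rowVal s (2*m+1) = ![s, s^(m+1), s^(m+2)] := by
      unfold rowVal
      rw [if_neg (by omega : ¬(2*m+1 = 1)),
        if_pos (by omega : ((2*m+1) % 2 = 0 ↔ ((2*m+1)/2) % 2 = 1)), hdiv']
    rw [e1, e2]
    have hr : (6/s + (1 - 1/s) * (2 * a₁ (2, s^(m+2)) + 2 * (1 - a₁ (1, s^(m+1)))))
        + (6/s + (1 - 1/s) * (2 * a₁ (1, s^(m+2)) + 2 * (1 - a₁ (2, s^(m+1)))))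
        = 12/s + (1 - 1/s) * (2*(a₁ (1, s^(m+2)) + a₁ (2, s^(m+2))) + 4
          - 2*(a₁ (1, s^(m+1)) + a₁ (2, s^(m+1)))) := by ring
    linarith

lemma tele' (h : ℕ → ℝ) (n : ℕ) :
    ∑ m ∈ Finset.Icc 1 n, (h (m+2) - h (m+1)) = h (n+2) - h 2 := by
  induction n with
  | zero => rw [Finset.Icc_eq_empty (by omega)]; simp
  | succ n ih => rw [Finset.sum_Icc_succ_top (by omega), ih]; ring


/-- For any 1-consistent randomized algorithm on the hardness instance
(with `s > 1`, even `k ≥ 4`, `ε ∈ (0,1)`, `r = 2k - 1`), the overall expected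
competitive ratio satisfies `ρ < 1/3 + (2/3)·(ε + (1-ε)·(1/s + 1/(k-1)))`. -/
theorem secretary_hardness_rho_bound (s ε : ℝ) (k : ℕ)
    (hs : 1 < s) (hk : 4 ≤ k) (hkeven : Even k) (hε0 : 0 < ε) (hε1 : ε < 1)
    (a₁ : Fin 3 × ℝ → ℝ) (a₂ : (Fin 3 × ℝ) × (Fin 3 × ℝ) → ℝ)
    (ha₁ : ∀ o, a₁ o ∈ Set.Icc (0 : ℝ) 1) (ha₂ : ∀ o, a₂ o ∈ Set.Icc (0 : ℝ) 1)
    (hcons : Consistent s a₁ a₂) :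
    rho s ε (2 * k - 1) a₁ a₂ <
      1 / 3 + (2 / 3) * (ε + (1 - ε) * (1 / s + 1 / ((k : ℝ) - 1))) := by
  have h0 : a₁ (0, s) = 1 := a1_eq_one s hs a₁ a₂ ha₁ ha₂ hcons
  have hK : (4:ℝ) ≤ (k:ℝ) := by exact_mod_cast hk
  have hKm : (0:ℝ) < (k:ℝ) - 1 := by linarith
  have hs0 : (0:ℝ) < s := by linarith
  have hε' : (0:ℝ) < 1 - ε := by linarith
  have h1s : (0:ℝ) ≤ 1 - 1/s := by
    have : 1/s ≤ 1 := by rw [div_le_one hs0]; linarith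
    linarith
  have hrcast : ((2*k-1 : ℕ) : ℝ) = 2*(k:ℝ) - 1 := by
    rw [Nat.cast_sub (by omega : 1 ≤ 2*k)]
    push_cast
    ring
  set q : ℝ := (1-ε)/(2*(k:ℝ)-2) with hq
  have hc : (1/6 : ℝ) * ∑ π : Equiv.Perm (Fin 3), ratio a₁ a₂ (rowVal s 1) π = 1 := hcons
  have step1 : rho s ε (2*k-1) a₁ a₂ = ε + q * ((1/6) *
      ∑ i ∈ Finset.Icc 2 (2*k-1), ∑ π : Equiv.Perm (Fin 3), ratio a₁ a₂ (rowVal s i) π) := by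
    unfold rho
    rw [show Finset.Icc 1 (2*k-1) = insert 1 (Finset.Icc 2 (2*k-1)) by
      ext x; simp only [Finset.mem_insert, Finset.mem_Icc]; omega]
    rw [Finset.sum_insert (by simp [Finset.mem_Icc])]
    have t1 : rowProb ε (2*k-1) 1 = ε := by unfold rowProb; simp
    have t2 : ∀ i ∈ Finset.Icc 2 (2*k-1),
        rowProb ε (2*k-1) i * ((1/6) * ∑ π : Equiv.Perm (Fin 3), ratio a₁ a₂ (rowVal s i) π)
        = q * ((1/6) * ∑ π : Equiv.Perm (Fin 3), ratio a₁ a₂ (rowVal s i) π) := by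
      intro i hi
      rw [Finset.mem_Icc] at hi
      unfold rowProb
      rw [if_neg (by omega), hrcast, hq]
      congr 1
      ring
    rw [Finset.sum_congr rfl t2, ← Finset.mul_sum, t1, hc, mul_one, ← Finset.mul_sum]
  have step2 : ∑ i ∈ Finset.Icc 2 (2*k-1), ∑ π : Equiv.Perm (Fin 3), ratio a₁ a₂ (rowVal s i) π
      ≤ ((k:ℝ)-1)*(12/s) + (1-1/s)*(4 + 4*((k:ℝ)-1)) := by
    rw [show 2*k-1 = 2*(k-1)+1 by omega,
      sum_pair (fun i => ∑ π : Equiv.Perm (Fin 3), ratio a₁ a₂ (rowVal s i) π) (k-1)]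
    set β : ℕ → ℝ := fun p => a₁ (1, s^p) + a₁ (2, s^p) with hβ
    have hb1 : ∑ m ∈ Finset.Icc 1 (k-1),
        ((∑ π : Equiv.Perm (Fin 3), ratio a₁ a₂ (rowVal s (2*m)) π)
          + ∑ π : Equiv.Perm (Fin 3), ratio a₁ a₂ (rowVal s (2*m+1)) π) ≤
        ∑ m ∈ Finset.Icc 1 (k-1), (12/s + (1-1/s)*(2*β (m+2) + 4 - 2*β (m+1))) := by
      apply Finset.sum_le_sum
      intro m hm
      rw [Finset.mem_Icc] at hm
      have hpb := pair_bound s hs m hm.1 a₁ a₂ ha₁ ha₂ h0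
      simp only [hβ]
      linarith
    have hsum2 : ∑ m ∈ Finset.Icc 1 (k-1), (12/s + (1-1/s)*(2*β (m+2) + 4 - 2*β (m+1)))
        = ((k:ℝ)-1) * (12/s + 4*(1-1/s)) + (2*(1-1/s)) * (β (k+1) - β 2) := by
      have hconst : ∀ m ∈ Finset.Icc 1 (k-1), 12/s + (1-1/s)*(2*β (m+2) + 4 - 2*β (m+1))
          = (12/s + 4*(1-1/s)) + (2*(1-1/s))*(β (m+2) - β (m+1)) := by
        intro m _; ring
      rw [Finset.sum_congr rfl hconst, Finset.sum_add_distrib, Finset.sum_const,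
        ← Finset.mul_sum, tele' β (k-1), show k-1+2 = k+1 by omega, Nat.card_Icc,
        show k-1+1-1 = k-1 by omega, nsmul_eq_mul, Nat.cast_sub (by omega : 1 ≤ k),
        Nat.cast_one]
    have hβb : β (k+1) - β 2 ≤ 2 := by
      have h1 := (ha₁ (1, s^(k+1))).2
      have h2 := (ha₁ (2, s^(k+1))).2
      have h3 := (ha₁ (1, s^2)).1
      have h4 := (ha₁ (2, s^2)).1
      simp only [hβ]
      linarith
    calc _ ≤ _ := hb1
      _ = _ := hsum2
      _ ≤ ((k:ℝ)-1)*(12/s) + (1-1/s)*(4 + 4*((k:ℝ)-1)) := by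
          nlinarith [mul_nonneg h1s (by linarith : (0:ℝ) ≤ 2 - (β (k+1) - β 2))]
  rw [step1]
  have hq0 : (0:ℝ) ≤ q := by
    rw [hq]
    exact div_nonneg (le_of_lt hε') (by linarith)
  have hmono : q * ((1/6) * ∑ i ∈ Finset.Icc 2 (2*k-1),
        ∑ π : Equiv.Perm (Fin 3), ratio a₁ a₂ (rowVal s i) π)
      ≤ q * ((1/6) * (((k:ℝ)-1)*(12/s) + (1-1/s)*(4 + 4*((k:ℝ)-1)))) :=
    mul_le_mul_of_nonneg_left (mul_le_mul_of_nonneg_left step2 (by norm_num)) hq0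
  have hne1 : ((k:ℝ)-1) ≠ 0 := ne_of_gt hKm
  have hne2 : (2*(k:ℝ)-2) ≠ 0 := by intro h; apply hne1; linarith
  have hsne : s ≠ 0 := ne_of_gt hs0
  have key : (1/3 + (2/3) * (ε + (1-ε)*(1/s + 1/((k:ℝ)-1))))
      - (ε + q * ((1/6) * (((k:ℝ)-1)*(12/s) + (1-1/s)*(4 + 4*((k:ℝ)-1)))))
      = (1-ε)*(1 + 1/s)/(3*((k:ℝ)-1)) := by
    rw [hq]
    field_simp
    ring
  have hpos : (0:ℝ) < (1-ε)*(1 + 1/s)/(3*((k:ℝ)-1)) := by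
    apply div_pos
    · apply mul_pos hε'
      have : (0:ℝ) < 1/s := one_div_pos.2 hs0
      linarith
    · linarith
  linarith
end

section
/- Take s = 400, k = 400, and ε = 0.01 in the hardness instance. Then any 1-consistent randomized algorithm has overall expected competitive ratio ρ < 1/3 + 0.01. -/
open Finset

/-! Consistency forces the algorithm to accept candidate 0 whenever it arrives first with value
`s`: otherwise it loses in the identity order of the predicted row `(s, 1, 1)`. In every other row
candidate 0 is then worth at most `1/s` of the maximum, so up to `1/s` a row's ratio is decided by
the first arrival: the top candidate earns the probability of accepting it, the middle one the
probability of rejecting it. Rows `2m` and `2m+1` swap the values `s^(m+1)` and `s^(m+2)` between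
candidates 1 and 2, so across such a pair the first-arrival acceptance probabilities at value
`s^(m+1)` enter with a minus sign and those at `s^(m+2)` with a plus sign. Summing over the pairs
telescopes, giving `ρ ≤ ε + (1 - ε) (1/s + k / (3 (k - 1)))`, which at `s = k = 400`,
`ε = 0.01` is just below `1/3 + 0.01`. -/

lemma two_stage_mix_le {p q y₀ y₁ y₂ c : ℝ} (hp : p ∈ Set.Icc (0 : ℝ) 1)
    (hq : q ∈ Set.Icc (0 : ℝ) 1) (h₁ : y₁ ≤ c) (h₂ : y₂ ≤ c) :
    p * y₀ + (1 - p) * (q * y₁ + (1 - q) * y₂) ≤ p * y₀ + (1 - p) * c := by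
  obtain ⟨hp₀, hp₁⟩ := hp
  obtain ⟨hq₀, hq₁⟩ := hq
  have : q * y₁ + (1 - q) * y₂ ≤ c := by nlinarith
  nlinarith

lemma sum_perm_fin_three_apply_zero (g : Fin 3 → ℝ) :
    ∑ π : Equiv.Perm (Fin 3), g (π 0) = 2 * ∑ c, g c := by
  rw [← sum_fiberwise univ (fun π : Equiv.Perm (Fin 3) => π 0), mul_sum]
  refine sum_congr rfl fun c _ => ?_
  have hcard : #{π : Equiv.Perm (Fin 3) | π 0 = c} = 2 := by revert c; decide
  rw [sum_congr rfl fun π hπ => by rw [(mem_filter.1 hπ).2], sum_const, hcard, nsmul_eq_mul]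
  norm_num

lemma sum_Icc_one_two_mul_add_one {M : Type*} [AddCommMonoid M] (f : ℕ → M) (n : ℕ) :
    ∑ i ∈ Icc 1 (2 * n + 1), f i = f 1 + ∑ m ∈ range n, (f (2 * m + 2) + f (2 * m + 3)) := by
  induction n with
  | zero => simp
  | succ n ih =>
    rw [show 2 * (n + 1) + 1 = 2 * n + 1 + 1 + 1 by ring, sum_Icc_succ_top (by omega),
      sum_Icc_succ_top (by omega), ih, sum_range_succ]
    abel

noncomputable def rowMax (v : Fin 3 → ℝ) : ℝ := max (v 0) (max (v 1) (v 2))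

lemma le_rowMax (v : Fin 3 → ℝ) (i : Fin 3) : v i ≤ rowMax v := by
  fin_cases i <;> simp [rowMax]

lemma rowMax_eq_of_le {v : Fin 3 → ℝ} {j : Fin 3} (h : ∀ i, v i ≤ v j) : rowMax v = v j :=
  le_antisymm (max_le (h 0) (max_le (h 1) (h 2))) (le_rowMax v j)

noncomputable def avgRatio (a₁ : Fin 3 × ℝ → ℝ) (a₂ : (Fin 3 × ℝ) × (Fin 3 × ℝ) → ℝ)
    (v : Fin 3 → ℝ) : ℝ :=
  (1 / 6) * ∑ π : Equiv.Perm (Fin 3), ratio a₁ a₂ v π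

lemma rowProb_of_ne_one {ε : ℝ} {r i : ℕ} (h : i ≠ 1) : rowProb ε r i = (1 - ε) / ((r : ℝ) - 1) :=
  if_neg h

lemma rowVal_two_mul_add_two (s : ℝ) (m : ℕ) :
    (rowVal s (2 * m + 2) = ![s, s ^ (m + 2), s ^ (m + 3)] ∧
      rowVal s (2 * m + 3) = ![s, s ^ (m + 3), s ^ (m + 2)]) ∨
    (rowVal s (2 * m + 2) = ![s, s ^ (m + 3), s ^ (m + 2)] ∧
      rowVal s (2 * m + 3) = ![s, s ^ (m + 2), s ^ (m + 3)]) := by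
  have h₂ : (2 * m + 2) / 2 = m + 1 := by omega
  have h₃ : (2 * m + 3) / 2 = m + 1 := by omega
  rcases Nat.mod_two_eq_zero_or_one m with hm | hm
  · left
    constructor <;> simp [rowVal, h₂, h₃, Nat.add_mod, hm]
  · right
    constructor <;> simp [rowVal, h₂, h₃, Nat.add_mod, hm]

variable {s : ℝ} {a₁ : Fin 3 × ℝ → ℝ} {a₂ : (Fin 3 × ℝ) × (Fin 3 × ℝ) → ℝ}

lemma ratio_le_of_later_le (ha₁ : ∀ o, a₁ o ∈ Set.Icc (0 : ℝ) 1)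
    (ha₂ : ∀ o, a₂ o ∈ Set.Icc (0 : ℝ) 1)
    {v : Fin 3 → ℝ} (π : Equiv.Perm (Fin 3)) (hM : 0 < rowMax v) {c : ℝ}
    (hc : ∀ t ≠ 0, v (π t) ≤ c * rowMax v) :
    ratio a₁ a₂ v π ≤
      a₁ (π 0, v (π 0)) * (v (π 0) / rowMax v) + (1 - a₁ (π 0, v (π 0))) * c :=
  two_stage_mix_le (ha₁ _) (ha₂ _) ((div_le_iff₀ hM).2 (hc 1 (by decide)))
    ((div_le_iff₀ hM).2 (hc 2 (by decide)))

lemma ratio_le_one (ha₁ : ∀ o, a₁ o ∈ Set.Icc (0 : ℝ) 1) (ha₂ : ∀ o, a₂ o ∈ Set.Icc (0 : ℝ) 1)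
    {v : Fin 3 → ℝ} (π : Equiv.Perm (Fin 3)) (hM : 0 < rowMax v) : ratio a₁ a₂ v π ≤ 1 := by
  have h := ratio_le_of_later_le ha₁ ha₂ π hM (c := 1) fun t _ => by simpa using le_rowMax v (π t)
  have hy : v (π 0) / rowMax v ≤ 1 := (div_le_one hM).2 (le_rowMax v _)
  nlinarith [(ha₁ (π 0, v (π 0))).1]

lemma Consistent.accept_first (hs : 1 < s) (ha₁ : ∀ o, a₁ o ∈ Set.Icc (0 : ℝ) 1)
    (ha₂ : ∀ o, a₂ o ∈ Set.Icc (0 : ℝ) 1) (hcons : Consistent s a₁ a₂) : a₁ (0, s) = 1 := by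
  have hs₀ : 0 < s := zero_lt_one.trans hs
  have hM : rowMax ![s, 1, 1] = s := by simp [rowMax, hs.le]
  have hM₀ : 0 < rowMax ![s, 1, 1] := by rw [hM]; exact hs₀
  rw [Consistent, show rowVal s 1 = ![s, 1, 1] by simp [rowVal]] at hcons
  by_contra hne
  have hp : a₁ (0, s) < 1 := lt_of_le_of_ne (ha₁ _).2 hne
  have hid : ratio a₁ a₂ ![s, 1, 1] 1 < 1 := by
    have h := ratio_le_of_later_le ha₁ ha₂ 1 hM₀ (c := 1 / s) fun t ht => by
      fin_cases t
      · exact absurd rfl ht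
      all_goals simp [hM, hs₀.ne']
    simp only [Equiv.Perm.coe_one, id, Matrix.cons_val_zero, hM, div_self hs₀.ne', mul_one] at h
    have hlost := mul_lt_of_lt_one_right (sub_pos.2 hp) ((div_lt_one hs₀).2 hs)
    linarith
  have := sum_lt_sum (s := univ) (fun π _ => ratio_le_one ha₁ ha₂ π hM₀) ⟨1, mem_univ _, hid⟩
  rw [sum_const, card_univ, Fintype.card_perm, Fintype.card_fin, nsmul_eq_mul] at this
  norm_num [Nat.factorial] at this
  linarith

lemma avgRatio_le_of_top (ha₁ : ∀ o, a₁ o ∈ Set.Icc (0 : ℝ) 1)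
    (ha₂ : ∀ o, a₂ o ∈ Set.Icc (0 : ℝ) 1) {v : Fin 3 → ℝ} {j : Fin 3} {δ : ℝ}
    (hv : ∀ i, 0 ≤ v i) (hj : 0 < v j) (hδ₀ : 0 ≤ δ) (hδ₁ : δ ≤ 1)
    (htop : ∀ i ≠ j, v i ≤ δ * v j) :
    avgRatio a₁ a₂ v ≤
      δ + (∑ i, if i = j then a₁ (i, v i) else 1 - a₁ (i, v i)) / 3 := by
  have hM : rowMax v = v j := rowMax_eq_of_le fun i => by
    by_cases hi : i = j
    · rw [hi]
    · nlinarith [htop i hi]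
  have hM₀ : 0 < rowMax v := hM ▸ hj
  set g : Fin 3 → ℝ := fun i => δ + if i = j then a₁ (i, v i) else 1 - a₁ (i, v i)
  have hπ : ∀ π, ratio a₁ a₂ v π ≤ g (π 0) := by
    intro π
    by_cases h0 : π 0 = j
    · have h := ratio_le_of_later_le ha₁ ha₂ π hM₀ (c := δ) fun t ht =>
        hM ▸ htop _ (h0 ▸ π.injective.ne ht)
      rw [hM, h0, div_self hj.ne'] at h
      obtain ⟨hp₀, -⟩ := ha₁ (j, v j)
      simp only [g, h0, if_true]
      nlinarith
    · have h := ratio_le_of_later_le ha₁ ha₂ π hM₀ (c := 1) fun t _ => by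
        simpa using le_rowMax v (π t)
      have hy : v (π 0) / rowMax v ≤ δ := by rw [hM]; exact (div_le_iff₀ hj).2 (htop _ h0)
      have hy₀ : 0 ≤ v (π 0) / rowMax v := div_nonneg (hv _) hM₀.le
      obtain ⟨-, hp₁⟩ := ha₁ (π 0, v (π 0))
      simp only [g, h0, if_false]
      nlinarith
  calc avgRatio a₁ a₂ v ≤ (1 / 6) * ∑ π : Equiv.Perm (Fin 3), g (π 0) := by
        unfold avgRatio; gcongr with π; exact hπ π
    _ = δ + (∑ i, if i = j then a₁ (i, v i) else 1 - a₁ (i, v i)) / 3 := by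
        rw [sum_perm_fin_three_apply_zero, sum_add_distrib, sum_const, card_univ, Fintype.card_fin]
        ring

lemma avgRatio_add_avgRatio_swap_le (hs : 1 ≤ s) (ha₁ : ∀ o, a₁ o ∈ Set.Icc (0 : ℝ) 1)
    (ha₂ : ∀ o, a₂ o ∈ Set.Icc (0 : ℝ) 1) {A B : ℝ} (hA : 0 ≤ A) (hsB : s * s ≤ B)
    (hAB : s * A ≤ B) :
    avgRatio a₁ a₂ ![s, A, B] + avgRatio a₁ a₂ ![s, B, A] ≤
      2 / s + (2 * (1 - a₁ (0, s)) + 2 - (a₁ (1, A) + a₁ (2, A)) +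
        (a₁ (1, B) + a₁ (2, B))) / 3 := by
  have hs₀ : 0 < s := zero_lt_one.trans_le hs
  have hB : 0 < B := by nlinarith
  have hδ₁ : 1 / s ≤ 1 := (div_le_one hs₀).2 hs
  have hs_le : s ≤ 1 / s * B := by rw [one_div_mul_eq_div, le_div_iff₀ hs₀]; linarith
  have hA_le : A ≤ 1 / s * B := by rw [one_div_mul_eq_div, le_div_iff₀ hs₀]; linarith
  have h₁ := avgRatio_le_of_top ha₁ ha₂ (v := ![s, A, B]) (j := 2) (δ := 1 / s)
    (fun i => by fin_cases i <;> simp [hs₀.le, hA, hB.le]) hB (by positivity) hδ₁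
    (fun i hi => by fin_cases i <;> simp_all)
  have h₂ := avgRatio_le_of_top ha₁ ha₂ (v := ![s, B, A]) (j := 1) (δ := 1 / s)
    (fun i => by fin_cases i <;> simp [hs₀.le, hA, hB.le]) hB (by positivity) hδ₁
    (fun i hi => by fin_cases i <;> simp_all)
  simp only [Fin.sum_univ_three, one_div, Fin.isValue, Fin.reduceEq, ↓reduceIte,
    Matrix.cons_val_zero, Matrix.cons_val_one, Matrix.cons_val, zero_ne_one] at h₁ h₂
  linarith [show 2 / s = s⁻¹ + s⁻¹ by ring]

lemma avgRatio_rowVal_pair_le (hs : 1 < s) (ha₁ : ∀ o, a₁ o ∈ Set.Icc (0 : ℝ) 1)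
    (ha₂ : ∀ o, a₂ o ∈ Set.Icc (0 : ℝ) 1) (h0 : a₁ (0, s) = 1) (m : ℕ) :
    avgRatio a₁ a₂ (rowVal s (2 * m + 2)) + avgRatio a₁ a₂ (rowVal s (2 * m + 3)) ≤
      2 / s + 2 / 3 + ((a₁ (1, s ^ (m + 3)) + a₁ (2, s ^ (m + 3))) -
        (a₁ (1, s ^ (m + 2)) + a₁ (2, s ^ (m + 2)))) / 3 := by
  have h := avgRatio_add_avgRatio_swap_le hs.le ha₁ ha₂ (A := s ^ (m + 2)) (B := s ^ (m + 3))
    (by positivity) (by rw [← sq]; exact pow_le_pow_right₀ hs.le (by omega)) (le_of_eq (by ring))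
  rcases rowVal_two_mul_add_two s m with ⟨h₂, h₃⟩ | ⟨h₂, h₃⟩ <;> rw [h₂, h₃] <;> linarith

lemma sum_avgRatio_rowVal_pair_le (hs : 1 < s) (ha₁ : ∀ o, a₁ o ∈ Set.Icc (0 : ℝ) 1)
    (ha₂ : ∀ o, a₂ o ∈ Set.Icc (0 : ℝ) 1) (h0 : a₁ (0, s) = 1) (n : ℕ) :
    ∑ m ∈ range n, (avgRatio a₁ a₂ (rowVal s (2 * m + 2)) +
      avgRatio a₁ a₂ (rowVal s (2 * m + 3))) ≤ n * (2 / s + 2 / 3) + 2 / 3 := by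
  set F : ℕ → ℝ := fun m => a₁ (1, s ^ (m + 2)) + a₁ (2, s ^ (m + 2)) with hF
  calc _ ≤ ∑ m ∈ range n, (2 / s + 2 / 3 + (F (m + 1) - F m) / 3) := by
        refine sum_le_sum fun m _ => ?_
        have h := avgRatio_rowVal_pair_le hs ha₁ ha₂ h0 m
        rwa [show m + 3 = m + 1 + 2 by ring] at h
    _ = n * (2 / s + 2 / 3) + (F n - F 0) / 3 := by
        rw [sum_add_distrib, ← sum_div, sum_range_sub, sum_const, card_range, nsmul_eq_mul]
    _ ≤ n * (2 / s + 2 / 3) + 2 / 3 := by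
        obtain ⟨-, h₁⟩ := ha₁ (1, s ^ (n + 2))
        obtain ⟨-, h₂⟩ := ha₁ (2, s ^ (n + 2))
        obtain ⟨h₃, -⟩ := ha₁ (1, s ^ (0 + 2))
        obtain ⟨h₄, -⟩ := ha₁ (2, s ^ (0 + 2))
        simp only [hF]
        linarith

theorem rho_le_of_consistent (hs : 1 < s) {k : ℕ} (hk : 2 ≤ k) {ε : ℝ} (hε : ε ≤ 1)
    (ha₁ : ∀ o, a₁ o ∈ Set.Icc (0 : ℝ) 1) (ha₂ : ∀ o, a₂ o ∈ Set.Icc (0 : ℝ) 1)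
    (hcons : Consistent s a₁ a₂) :
    rho s ε (2 * k - 1) a₁ a₂ ≤ ε + (1 - ε) * (1 / s + k / (3 * (k - 1))) := by
  obtain ⟨n, rfl⟩ : ∃ n, k = n + 1 := ⟨k - 1, by omega⟩
  have hn : (0 : ℝ) < n := by exact_mod_cast (by omega : 0 < n)
  set q : ℝ := (1 - ε) / (((2 * n + 1 : ℕ) : ℝ) - 1) with hq
  have hq₀ : 0 ≤ q := div_nonneg (by linarith) (by push_cast; linarith)
  calc rho s ε (2 * (n + 1) - 1) a₁ a₂
      = ε * 1 + q * ∑ m ∈ range n, (avgRatio a₁ a₂ (rowVal s (2 * m + 2)) +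
          avgRatio a₁ a₂ (rowVal s (2 * m + 3))) := by
        rw [rho, show 2 * (n + 1) - 1 = 2 * n + 1 by omega, sum_Icc_one_two_mul_add_one]
        congr 1
        · rw [rowProb, if_pos rfl]; exact congrArg _ hcons
        · rw [mul_sum _ _ q]
          refine sum_congr rfl fun m _ => ?_
          rw [rowProb_of_ne_one (by omega), rowProb_of_ne_one (by omega), mul_add]; rfl
    _ ≤ ε * 1 + q * (n * (2 / s + 2 / 3) + 2 / 3) := by
        gcongr
        exact sum_avgRatio_rowVal_pair_le hs ha₁ ha₂ (hcons.accept_first hs ha₁ ha₂) n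
    _ = ε + (1 - ε) * (1 / s + ((n + 1 : ℕ) : ℝ) / (3 * ((n + 1 : ℕ) - 1))) := by
        rw [hq]; push_cast; field_simp [hn.ne']; ring

/-- With `s = 400`, `k = 400` (so `r = 799`) and `ε = 0.01` in the
hardness instance, any 1-consistent randomized algorithm has overall expected
competitive ratio `ρ < 1/3 + 0.01`. -/
theorem secretary_hardness_one_third_plus
    (a₁ : Fin 3 × ℝ → ℝ) (a₂ : (Fin 3 × ℝ) × (Fin 3 × ℝ) → ℝ)
    (ha₁ : ∀ o, a₁ o ∈ Set.Icc (0 : ℝ) 1) (ha₂ : ∀ o, a₂ o ∈ Set.Icc (0 : ℝ) 1)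
    (hcons : Consistent 400 a₁ a₂) :
    rho 400 0.01 (2 * 400 - 1) a₁ a₂ < 1 / 3 + 0.01 := by
  calc rho 400 0.01 (2 * 400 - 1) a₁ a₂
      ≤ 0.01 + (1 - 0.01) * (1 / 400 + ((400 : ℕ) : ℝ) / (3 * ((400 : ℕ) - 1))) :=
        rho_le_of_consistent (k := 400) (ε := 0.01) (by norm_num) (by norm_num) (by norm_num)
          ha₁ ha₂ hcons
    _ < 1 / 3 + 0.01 := by norm_num
end

section
/- If a randomized algorithm (a₁, a₂) on the hardness instance is 1-consistent, then necessarily a₁(1, s) = 1, a₁(2, 1) = 0, a₁(3, 1) = 0, a₂((2,1),(1,s)) = 1, a₂((3,1),(1,s)) = 1, a₂((2,1),(3,1)) = 0, and a₂((3,1),(2,1)) = 0. -/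
open Finset

private lemma ratio_le_one_aux (s : ℝ) (hs : 1 < s) (a₁ : Fin 3 × ℝ → ℝ)
    (a₂ : (Fin 3 × ℝ) × (Fin 3 × ℝ) → ℝ)
    (ha₁ : ∀ o, a₁ o ∈ Set.Icc (0 : ℝ) 1) (ha₂ : ∀ o, a₂ o ∈ Set.Icc (0 : ℝ) 1)
    (π : Equiv.Perm (Fin 3)) : ratio a₁ a₂ (rowVal s 1) π ≤ 1 := by
  have hv : rowVal s 1 = ![s, 1, 1] := by simp [rowVal]
  have hx : ∀ j : Fin 3, 0 ≤ rowVal s 1 j ∧ rowVal s 1 j ≤ s := by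
    intro j; rw [hv]; fin_cases j <;> simp <;> linarith
  have hM : max (rowVal s 1 0) (max (rowVal s 1 1) (rowVal s 1 2)) = s := by
    rw [hv]; simp; linarith
  obtain ⟨h1a, h1b⟩ := ha₁ (π 0, rowVal s 1 (π 0))
  obtain ⟨h2a, h2b⟩ := ha₂ ((π 0, rowVal s 1 (π 0)), (π 1, rowVal s 1 (π 1)))
  have hs0 : (0:ℝ) < s := by linarith
  obtain ⟨e0a, e0b⟩ := hx (π 0)
  obtain ⟨e1a, e1b⟩ := hx (π 1)
  obtain ⟨e2a, e2b⟩ := hx (π 2)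
  simp only [ratio, hM]
  have d0 : rowVal s 1 (π 0) / s ≤ 1 := by rw [div_le_one hs0]; exact e0b
  have d1 : rowVal s 1 (π 1) / s ≤ 1 := by rw [div_le_one hs0]; exact e1b
  have d2 : rowVal s 1 (π 2) / s ≤ 1 := by rw [div_le_one hs0]; exact e2b
  have d0' : 0 ≤ rowVal s 1 (π 0) / s := by positivity
  have d1' : 0 ≤ rowVal s 1 (π 1) / s := by positivity
  have d2' : 0 ≤ rowVal s 1 (π 2) / s := by positivity
  set p := a₁ (π 0, rowVal s 1 (π 0)) with hp
  set q := a₂ ((π 0, rowVal s 1 (π 0)), π 1, rowVal s 1 (π 1)) with hq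
  have inner : q * (rowVal s 1 (π 1) / s) + (1 - q) * (rowVal s 1 (π 2) / s) ≤ 1 := by
    nlinarith [mul_nonneg h2a (sub_nonneg.2 d1), mul_nonneg (sub_nonneg.2 h2b) (sub_nonneg.2 d2)]
  nlinarith [mul_nonneg h1a (sub_nonneg.2 d0), mul_nonneg (sub_nonneg.2 h1b) (sub_nonneg.2 inner)]

private lemma ratio_eq_one_aux (s : ℝ) (hs : 1 < s) (a₁ : Fin 3 × ℝ → ℝ)
    (a₂ : (Fin 3 × ℝ) × (Fin 3 × ℝ) → ℝ)
    (ha₁ : ∀ o, a₁ o ∈ Set.Icc (0 : ℝ) 1) (ha₂ : ∀ o, a₂ o ∈ Set.Icc (0 : ℝ) 1)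
    (hcons : Consistent s a₁ a₂) :
    ∀ π : Equiv.Perm (Fin 3), ratio a₁ a₂ (rowVal s 1) π = 1 := by
  have hle := ratio_le_one_aux s hs a₁ a₂ ha₁ ha₂
  have hcard : (Finset.univ : Finset (Equiv.Perm (Fin 3))).card = 6 := by
    simp [Finset.card_univ, Fintype.card_perm]; rfl
  unfold Consistent at hcons
  have hsum0 : ∑ π : Equiv.Perm (Fin 3), (1 - ratio a₁ a₂ (rowVal s 1) π) = 0 := by
    rw [Finset.sum_sub_distrib, Finset.sum_const, hcard]
    have : ∑ π : Equiv.Perm (Fin 3), ratio a₁ a₂ (rowVal s 1) π = 6 := by linarith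
    rw [this]; ring
  intro π
  have := (Finset.sum_eq_zero_iff_of_nonneg (fun π _ => by linarith [hle π])).1 hsum0 π
    (Finset.mem_univ π)
  linarith

/-- Any 1-consistent randomized algorithm `(a₁, a₂)` on the hardness
instance must behave deterministically on the observations arising from row 1:
it rejects a first arrival of candidate 2 or 3 with value 1, accepts a first arrival
of candidate 1 with value `s`, accepts candidate 1 (value `s`) arriving second after
candidate 2 or 3 (value 1), and rejects candidate 2 or 3 (value 1) arriving second
after the other of candidates 2, 3 (value 1). Candidates 1, 2, 3 are encoded as
`0, 1, 2 : Fin 3`. -/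
theorem secretary_consistency_forces_actions (s ε : ℝ) (k : ℕ)
    (hs : 1 < s) (hk : 4 ≤ k) (hkeven : Even k) (hε0 : 0 < ε) (hε1 : ε < 1)
    (a₁ : Fin 3 × ℝ → ℝ) (a₂ : (Fin 3 × ℝ) × (Fin 3 × ℝ) → ℝ)
    (ha₁ : ∀ o, a₁ o ∈ Set.Icc (0 : ℝ) 1) (ha₂ : ∀ o, a₂ o ∈ Set.Icc (0 : ℝ) 1)
    (hcons : Consistent s a₁ a₂) :
    a₁ (0, s) = 1 ∧ a₁ (1, 1) = 0 ∧ a₁ (2, 1) = 0 ∧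
    a₂ ((1, 1), (0, s)) = 1 ∧ a₂ ((2, 1), (0, s)) = 1 ∧
    a₂ ((1, 1), (2, 1)) = 0 ∧ a₂ ((2, 1), (1, 1)) = 0 := by
  have hall := ratio_eq_one_aux s hs a₁ a₂ ha₁ ha₂ hcons
  have hs0 : (0:ℝ) < s := by linarith
  have hs0' : s ≠ 0 := ne_of_gt hs0
  have hv : rowVal s 1 = ![s, 1, 1] := by simp [rowVal]
  have hA := hall 1
  have hB := hall (Equiv.swap 0 1)
  have hC := hall (Equiv.swap 0 2)
  have hD := hall (finRotate 3)
  have hE := hall ((finRotate 3)⁻¹)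
  have eB0 : (Equiv.swap (0:Fin 3) 1) 0 = 1 := by decide
  have eB1 : (Equiv.swap (0:Fin 3) 1) 1 = 0 := by decide
  have eB2 : (Equiv.swap (0:Fin 3) 1) 2 = 2 := by decide
  have eC0 : (Equiv.swap (0:Fin 3) 2) 0 = 2 := by decide
  have eC1 : (Equiv.swap (0:Fin 3) 2) 1 = 1 := by decide
  have eC2 : (Equiv.swap (0:Fin 3) 2) 2 = 0 := by decide
  have eD0 : (finRotate 3) (0:Fin 3) = 1 := by decide
  have eD1 : (finRotate 3) (1:Fin 3) = 2 := by decide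
  have eD2 : (finRotate 3) (2:Fin 3) = 0 := by decide
  have eE0 : (finRotate 3)⁻¹ (0:Fin 3) = 2 := by decide
  have eE1 : (finRotate 3)⁻¹ (1:Fin 3) = 0 := by decide
  have eE2 : (finRotate 3)⁻¹ (2:Fin 3) = 1 := by decide
  simp only [ratio, hv, Equiv.Perm.one_apply, eB0, eB1, eB2, eC0, eC1, eC2,
    eD0, eD1, eD2, eE0, eE1, eE2, Matrix.cons_val_zero, Matrix.cons_val_one,
    Matrix.head_cons, Matrix.cons_val_two, Matrix.tail_cons] at hA hB hC hD hE
  have hmax : s ⊔ ((1:ℝ) ⊔ 1) = s := by rw [max_self]; exact max_eq_left hs.le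
  rw [hmax] at hA hB hC hD hE
  obtain ⟨w1a, w1b⟩ := ha₁ (0, s)
  obtain ⟨w2a, w2b⟩ := ha₁ (1, 1)
  obtain ⟨w3a, w3b⟩ := ha₁ (2, 1)
  obtain ⟨u1a, u1b⟩ := ha₂ ((0, s), (1, 1))
  obtain ⟨u2a, u2b⟩ := ha₂ ((1, 1), (0, s))
  obtain ⟨u3a, u3b⟩ := ha₂ ((2, 1), (0, s))
  obtain ⟨u4a, u4b⟩ := ha₂ ((1, 1), (2, 1))
  obtain ⟨u5a, u5b⟩ := ha₂ ((2, 1), (1, 1))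
  set A1 := a₁ (0, s) with hA1
  set B1 := a₁ (1, 1) with hB1
  set C1 := a₁ (2, 1) with hC1
  set Q1 := a₂ ((0, s), (1, 1)) with hQ1
  set Q2 := a₂ ((1, 1), (0, s)) with hQ2
  set Q3 := a₂ ((2, 1), (0, s)) with hQ3
  set Q4 := a₂ ((1, 1), (2, 1)) with hQ4
  set Q5 := a₂ ((2, 1), (1, 1)) with hQ5
  field_simp at hA hB hC hD hE
  have kA : (s - 1) * (A1 - 1) = 0 := by linear_combination hA
  have kB : (1 - B1) * Q2 = 1 := by
    have h : (s - 1) * ((1 - B1) * Q2 - 1) = 0 := by linear_combination hB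
    rcases mul_eq_zero.1 h with h | h
    · linarith
    · linarith
  have kE : (1 - C1) * Q3 = 1 := by
    have h : (s - 1) * ((1 - C1) * Q3 - 1) = 0 := by linear_combination hE
    rcases mul_eq_zero.1 h with h | h
    · linarith
    · linarith
  have kC : C1 + Q5 - C1 * Q5 = 0 := by
    have h : (s - 1) * (C1 + Q5 - C1 * Q5) = 0 := by linear_combination -hC
    rcases mul_eq_zero.1 h with h | h
    · linarith
    · linarith
  have kD : B1 + Q4 - B1 * Q4 = 0 := by
    have h : (s - 1) * (B1 + Q4 - B1 * Q4) = 0 := by linear_combination -hD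
    rcases mul_eq_zero.1 h with h | h
    · linarith
    · linarith
  have g1 : A1 = 1 := by
    rcases mul_eq_zero.1 kA with h | h
    · linarith
    · linarith
  clear hall hA hB hC hD hE eB0 eB1 eB2 eC0 eC1 eC2 eD0 eD1 eD2 eE0 eE1 eE2 hv kA
  have g4 : Q2 = 1 := by linarith [mul_nonneg w2a u2a, kB]
  have g2 : B1 = 0 := by rw [g4] at kB; linarith
  have g5 : Q3 = 1 := by linarith [mul_nonneg w3a u3a, kE]
  have g3 : C1 = 0 := by rw [g5] at kE; linarith
  have g6 : Q4 = 0 := by rw [g2] at kD; linarith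
  have g7 : Q5 = 0 := by rw [g3] at kC; linarith
  exact ⟨g1, g2, g3, g4, g5, g6, g7⟩
end

section
/- For every randomized algorithm on the hardness instance (not necessarily 1-consistent), its expected competitive ratio conditional on candidate 3 arriving first (i.e. on π(1) = 3) is at most ε + 2·(1−ε)/(r−1) + (1−ε)·((r−3)/(r−1))·(1/2 + 1/(2s)). -/
open Finset

/-- The expected competitive ratio conditional on candidate `c` arriving first:
the arrival order is uniform over the two permutations `π` with `π 0 = c`, and the
row `I ∈ {1, …, r}` is drawn according to `rowProb`. -/
noncomputable def condRho (s ε : ℝ) (r : ℕ) (a₁ : Fin 3 × ℝ → ℝ)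
    (a₂ : (Fin 3 × ℝ) × (Fin 3 × ℝ) → ℝ) (c : Fin 3) : ℝ :=
  (1 / 2) * ∑ π ∈ Finset.univ.filter (fun π : Equiv.Perm (Fin 3) => π 0 = c),
    ∑ i ∈ Finset.Icc 1 r, rowProb ε r i * ratio a₁ a₂ (rowVal s i) π

/-- Generic bound on `ratio`: accept-first value bounded by `c`, later values by `d`. -/
lemma ratio_le_of (a₁ : Fin 3 × ℝ → ℝ) (a₂ : (Fin 3 × ℝ) × (Fin 3 × ℝ) → ℝ)
    (ha₁ : ∀ o, a₁ o ∈ Set.Icc (0 : ℝ) 1) (ha₂ : ∀ o, a₂ o ∈ Set.Icc (0 : ℝ) 1)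
    (v : Fin 3 → ℝ) (π : Equiv.Perm (Fin 3)) (c d : ℝ)
    (h0 : v (π 0) / max (v 0) (max (v 1) (v 2)) ≤ c)
    (h1 : v (π 1) / max (v 0) (max (v 1) (v 2)) ≤ d)
    (h2 : v (π 2) / max (v 0) (max (v 1) (v 2)) ≤ d) :
    ratio a₁ a₂ v π ≤ a₁ (π 0, v (π 0)) * c + (1 - a₁ (π 0, v (π 0))) * d := by
  obtain ⟨hp10, hp11⟩ := ha₁ (π 0, v (π 0))
  obtain ⟨hp20, hp21⟩ := ha₂ ((π 0, v (π 0)), (π 1, v (π 1)))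
  unfold ratio
  simp only
  set M := max (v 0) (max (v 1) (v 2)) with hM
  set p1 := a₁ (π 0, v (π 0)) with hp1
  set p2 := a₂ ((π 0, v (π 0)), (π 1, v (π 1))) with hp2
  have hinner : p2 * (v (π 1) / M) + (1 - p2) * (v (π 2) / M) ≤ d := by
    have i1 : p2 * (v (π 1) / M) ≤ p2 * d := mul_le_mul_of_nonneg_left h1 hp20
    have i2 : (1 - p2) * (v (π 2) / M) ≤ (1 - p2) * d :=
      mul_le_mul_of_nonneg_left h2 (by linarith)
    nlinarith
  have t1 : p1 * (v (π 0) / M) ≤ p1 * c := mul_le_mul_of_nonneg_left h0 hp10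
  have t2 : (1 - p1) * (p2 * (v (π 1) / M) + (1 - p2) * (v (π 2) / M)) ≤ (1 - p1) * d :=
    mul_le_mul_of_nonneg_left hinner (by linarith)
  linarith

/-- Bound for a row whose maximum arrives first (candidate 3 first, column 3 maximal). -/
lemma ratio_A (s : ℝ) (hs : 1 < s) (a₁ : Fin 3 × ℝ → ℝ) (a₂ : (Fin 3 × ℝ) × (Fin 3 × ℝ) → ℝ)
    (ha₁ : ∀ o, a₁ o ∈ Set.Icc (0 : ℝ) 1) (ha₂ : ∀ o, a₂ o ∈ Set.Icc (0 : ℝ) 1)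
    (u : ℕ) (hu : 2 ≤ u) (π : Equiv.Perm (Fin 3)) (hπ : π 0 = 2) :
    ratio a₁ a₂ ![s, s ^ u, s ^ (u + 1)] π ≤
      a₁ (2, s ^ (u + 1)) * 1 + (1 - a₁ (2, s ^ (u + 1))) * (1 / s) := by
  have hs0 : (0 : ℝ) < s := by linarith
  set v : Fin 3 → ℝ := ![s, s ^ u, s ^ (u + 1)] with hv
  have hvals : v 0 = s ∧ v 1 = s ^ u ∧ v 2 = s ^ (u + 1) := by
    refine ⟨?_, ?_, ?_⟩ <;> simp [hv]
  have hsu : s ≤ s ^ u := by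
    calc s = s ^ 1 := (pow_one s).symm
    _ ≤ s ^ u := pow_le_pow_right₀ hs.le (by omega)
  have hsu1 : s ^ u ≤ s ^ (u + 1) := pow_le_pow_right₀ hs.le (by omega)
  have hMpos : (0 : ℝ) < s ^ (u + 1) := pow_pos hs0 _
  have hM : max (v 0) (max (v 1) (v 2)) = s ^ (u + 1) := by
    rw [hvals.1, hvals.2.1, hvals.2.2, max_eq_right hsu1, max_eq_right (le_trans hsu hsu1)]
  have key : ∀ j : Fin 3, j ≠ 2 → v j / max (v 0) (max (v 1) (v 2)) ≤ 1 / s := by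
    intro j hj
    rw [hM, div_le_div_iff₀ hMpos hs0]
    have hvj : v j ≤ s ^ u := by
      fin_cases j
      · simpa [hv] using hsu
      · simp [hv]
      · exact absurd rfl hj
    calc v j * s ≤ s ^ u * s := mul_le_mul_of_nonneg_right hvj hs0.le
    _ = s ^ (u + 1) := (pow_succ s u).symm
    _ = 1 * s ^ (u + 1) := (one_mul _).symm
  have h0 : v (π 0) / max (v 0) (max (v 1) (v 2)) ≤ 1 := by
    rw [hM, hπ, hvals.2.2, div_self hMpos.ne']
  have hne1 : π 1 ≠ 2 := fun h =>
    absurd (π.injective (h.trans hπ.symm)) (by decide)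
  have hne2 : π 2 ≠ 2 := fun h =>
    absurd (π.injective (h.trans hπ.symm)) (by decide)
  have h := ratio_le_of a₁ a₂ ha₁ ha₂ v π 1 (1 / s) h0 (key _ hne1) (key _ hne2)
  rw [hπ, hvals.2.2] at h
  exact h

/-- Bound for a row whose second-largest value arrives first. -/
lemma ratio_B (s : ℝ) (hs : 1 < s) (a₁ : Fin 3 × ℝ → ℝ) (a₂ : (Fin 3 × ℝ) × (Fin 3 × ℝ) → ℝ)
    (ha₁ : ∀ o, a₁ o ∈ Set.Icc (0 : ℝ) 1) (ha₂ : ∀ o, a₂ o ∈ Set.Icc (0 : ℝ) 1)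
    (u : ℕ) (hu : 2 ≤ u) (π : Equiv.Perm (Fin 3)) (hπ : π 0 = 2) :
    ratio a₁ a₂ ![s, s ^ (u + 1), s ^ u] π ≤
      a₁ (2, s ^ u) * (1 / s) + (1 - a₁ (2, s ^ u)) * 1 := by
  have hs0 : (0 : ℝ) < s := by linarith
  set v : Fin 3 → ℝ := ![s, s ^ (u + 1), s ^ u] with hv
  have hvals : v 0 = s ∧ v 1 = s ^ (u + 1) ∧ v 2 = s ^ u := by
    refine ⟨?_, ?_, ?_⟩ <;> simp [hv]
  have hsu : s ≤ s ^ u := by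
    calc s = s ^ 1 := (pow_one s).symm
    _ ≤ s ^ u := pow_le_pow_right₀ hs.le (by omega)
  have hsu1 : s ^ u ≤ s ^ (u + 1) := pow_le_pow_right₀ hs.le (by omega)
  have hMpos : (0 : ℝ) < s ^ (u + 1) := pow_pos hs0 _
  have hM : max (v 0) (max (v 1) (v 2)) = s ^ (u + 1) := by
    rw [hvals.1, hvals.2.1, hvals.2.2, max_eq_left hsu1, max_eq_right (le_trans hsu hsu1)]
  have key : ∀ j : Fin 3, v j / max (v 0) (max (v 1) (v 2)) ≤ 1 := by
    intro j
    rw [hM, div_le_one hMpos]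
    fin_cases j
    · simpa [hv] using le_trans hsu hsu1
    · simp [hv]
    · simpa [hv] using hsu1
  have h0 : v (π 0) / max (v 0) (max (v 1) (v 2)) ≤ 1 / s := by
    rw [hM, hπ, hvals.2.2, div_le_div_iff₀ hMpos hs0]
    calc s ^ u * s = s ^ (u + 1) := (pow_succ s u).symm
    _ = 1 * s ^ (u + 1) := (one_mul _).symm
    _ ≤ 1 * s ^ (u + 1) := le_rfl
  have h := ratio_le_of a₁ a₂ ha₁ ha₂ v π (1 / s) 1 h0 (key _) (key _)
  rw [hπ, hvals.2.2] at h
  exact h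

/-- Bound for row 1 : ratio is at most 1. -/
lemma ratio_row1 (s : ℝ) (hs : 1 < s) (a₁ : Fin 3 × ℝ → ℝ)
    (a₂ : (Fin 3 × ℝ) × (Fin 3 × ℝ) → ℝ)
    (ha₁ : ∀ o, a₁ o ∈ Set.Icc (0 : ℝ) 1) (ha₂ : ∀ o, a₂ o ∈ Set.Icc (0 : ℝ) 1)
    (π : Equiv.Perm (Fin 3)) :
    ratio a₁ a₂ ![s, 1, 1] π ≤ 1 := by
  have hs0 : (0 : ℝ) < s := by linarith
  set v : Fin 3 → ℝ := ![s, 1, 1] with hv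
  have hM : max (v 0) (max (v 1) (v 2)) = s := by
    simp only [hv, Matrix.cons_val_zero, Matrix.cons_val_one, Matrix.head_cons,
      Matrix.cons_val_two, Matrix.tail_cons]
    rw [max_self, max_eq_left (by linarith)]
  have key : ∀ j : Fin 3, v j / max (v 0) (max (v 1) (v 2)) ≤ 1 := by
    intro j
    rw [hM, div_le_one hs0]
    fin_cases j <;> simp [hv] <;> linarith
  have h := ratio_le_of a₁ a₂ ha₁ ha₂ v π 1 1 (key _) (key _) (key _)
  obtain ⟨hp10, hp11⟩ := ha₁ (π 0, v (π 0))
  nlinarith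

/-- Pairing the sum over rows `2..2K+1` into consecutive pairs. -/
lemma sum_Icc_pairs (F : ℕ → ℝ) : ∀ K : ℕ, ∑ i ∈ Finset.Icc 2 (2 * K + 1), F i =
    ∑ j ∈ Finset.range K, (F (2 * j + 2) + F (2 * j + 3))
  | 0 => by simp
  | (K + 1) => by
      rw [show 2 * (K + 1) + 1 = (2 * K + 2) + 1 by ring,
        Finset.sum_Icc_succ_top (by omega), show 2 * K + 2 = (2 * K + 1) + 1 by ring,
        Finset.sum_Icc_succ_top (by omega), sum_Icc_pairs F K, Finset.sum_range_succ]
      ring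

/-- Telescoping sum. -/
lemma sum_tele (p : ℕ → ℝ) : ∀ K : ℕ,
    ∑ j ∈ Finset.range K, (p (j + 3) - p (j + 2)) = p (K + 2) - p 2
  | 0 => by simp
  | (K + 1) => by
      rw [Finset.sum_range_succ, sum_tele p K]
      simp only [show K + 1 + 2 = K + 3 by omega]
      ring

/-- For every randomized algorithm on the hardness instance (not
necessarily 1-consistent), the expected competitive ratio conditional on candidate
3 arriving first is at most
`ε + 2·(1-ε)/(r-1) + (1-ε)·((r-3)/(r-1))·(1/2 + 1/(2s))` with `r = 2k - 1`.
Candidate 3 is encoded as `2 : Fin 3`. -/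
theorem secretary_hardness_case_first_is_cand3 (s ε : ℝ) (k : ℕ)
    (hs : 1 < s) (hk : 4 ≤ k) (hkeven : Even k) (hε0 : 0 < ε) (hε1 : ε < 1)
    (a₁ : Fin 3 × ℝ → ℝ) (a₂ : (Fin 3 × ℝ) × (Fin 3 × ℝ) → ℝ)
    (ha₁ : ∀ o, a₁ o ∈ Set.Icc (0 : ℝ) 1) (ha₂ : ∀ o, a₂ o ∈ Set.Icc (0 : ℝ) 1) :
    condRho s ε (2 * k - 1) a₁ a₂ 2 ≤
      ε + 2 * (1 - ε) / (((2 * k - 1 : ℕ) : ℝ) - 1) +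
        (1 - ε) * ((((2 * k - 1 : ℕ) : ℝ) - 3) / (((2 * k - 1 : ℕ) : ℝ) - 1)) *
          (1 / 2 + 1 / (2 * s)) := by
  have hs0 : (0 : ℝ) < s := by linarith
  set r : ℕ := 2 * k - 1 with hr
  have hrcast : ((r : ℕ) : ℝ) = 2 * (k : ℝ) - 1 := by
    have : (1 : ℕ) ≤ 2 * k := by omega
    push_cast [hr, Nat.cast_sub this]
    ring
  have hkR : (4 : ℝ) ≤ (k : ℝ) := by exact_mod_cast hk
  set q : ℝ := (1 - ε) / ((r : ℝ) - 1) with hq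
  have hq0 : 0 ≤ q := by
    apply div_nonneg (by linarith)
    rw [hrcast]; linarith
  set p : ℕ → ℝ := fun t => a₁ (2, s ^ t) with hp
  set T : ℝ := ε + q * (((k : ℝ) - 1) * (1 + 1 / s) + (1 - 1 / s) * (p (k + 1) - p 2))
    with hT
  -- per-permutation bound
  have main : ∀ π : Equiv.Perm (Fin 3), π 0 = 2 →
      ∑ i ∈ Finset.Icc 1 r, rowProb ε r i * ratio a₁ a₂ (rowVal s i) π ≤ T := by
    intro π hπ
    have hsplit : Finset.Icc 1 r = insert 1 (Finset.Icc 2 r) := by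
      ext x; simp only [Finset.mem_Icc, Finset.mem_insert]; omega
    rw [hsplit, Finset.sum_insert (by simp)]
    have hrow1 : rowProb ε r 1 * ratio a₁ a₂ (rowVal s 1) π ≤ ε := by
      have h1 : rowProb ε r 1 = ε := by rw [rowProb, if_pos rfl]
      have h2 : rowVal s 1 = ![s, 1, 1] := by rw [rowVal, if_pos rfl]
      rw [h1, h2]
      nlinarith [ratio_row1 s hs a₁ a₂ ha₁ ha₂ π]
    have hrest : ∑ i ∈ Finset.Icc 2 r, rowProb ε r i * ratio a₁ a₂ (rowVal s i) π ≤
        q * (((k : ℝ) - 1) * (1 + 1 / s) + (1 - 1 / s) * (p (k + 1) - p 2)) := by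
      have hconst : ∀ i ∈ Finset.Icc 2 r, rowProb ε r i * ratio a₁ a₂ (rowVal s i) π =
          q * ratio a₁ a₂ (rowVal s i) π := by
        intro i hi
        rw [Finset.mem_Icc] at hi
        rw [rowProb, if_neg (by omega)]
      rw [Finset.sum_congr rfl hconst, ← Finset.mul_sum]
      apply mul_le_mul_of_nonneg_left _ hq0
      have hrK : r = 2 * (k - 1) + 1 := by omega
      rw [hrK, sum_Icc_pairs (fun i => ratio a₁ a₂ (rowVal s i) π) (k - 1)]
      have pair_bound : ∀ j ∈ Finset.range (k - 1),
          ratio a₁ a₂ (rowVal s (2 * j + 2)) π + ratio a₁ a₂ (rowVal s (2 * j + 3)) π ≤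
            (1 + 1 / s) + (1 - 1 / s) * (p (j + 3) - p (j + 2)) := by
        intro j hj
        have hd2 : (2 * j + 2) / 2 = j + 1 := by omega
        have hd3 : (2 * j + 3) / 2 = j + 1 := by omega
        rcases Nat.even_or_odd j with hje | hjo
        · have hmod : (j + 1) % 2 = 1 := by
            obtain ⟨c, hc⟩ := hje; omega
          have e1 : rowVal s (2 * j + 2) = ![s, s ^ (j + 2), s ^ (j + 2 + 1)] := by
            rw [rowVal, if_neg (by omega), if_pos (by omega), hd2]
          have e2 : rowVal s (2 * j + 3) = ![s, s ^ (j + 2 + 1), s ^ (j + 2)] := by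
            rw [rowVal, if_neg (by omega), if_neg (by omega), hd3]
          have b1 := ratio_A s hs a₁ a₂ ha₁ ha₂ (j + 2) (by omega) π hπ
          have b2 := ratio_B s hs a₁ a₂ ha₁ ha₂ (j + 2) (by omega) π hπ
          rw [e1, e2]
          have hp3 : p (j + 3) = a₁ (2, s ^ (j + 2 + 1)) := by
            simp only [hp, show j + 3 = j + 2 + 1 by omega]
          have hp2 : p (j + 2) = a₁ (2, s ^ (j + 2)) := rfl
          rw [hp3, hp2]
          linarith
        · have hmod : (j + 1) % 2 = 0 := by
            obtain ⟨c, hc⟩ := hjo; omega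
          have e1 : rowVal s (2 * j + 2) = ![s, s ^ (j + 2 + 1), s ^ (j + 2)] := by
            rw [rowVal, if_neg (by omega), if_neg (by omega), hd2]
          have e2 : rowVal s (2 * j + 3) = ![s, s ^ (j + 2), s ^ (j + 2 + 1)] := by
            rw [rowVal, if_neg (by omega), if_pos (by omega), hd3]
          have b1 := ratio_B s hs a₁ a₂ ha₁ ha₂ (j + 2) (by omega) π hπ
          have b2 := ratio_A s hs a₁ a₂ ha₁ ha₂ (j + 2) (by omega) π hπ
          rw [e1, e2]
          have hp3 : p (j + 3) = a₁ (2, s ^ (j + 2 + 1)) := by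
            simp only [hp, show j + 3 = j + 2 + 1 by omega]
          have hp2 : p (j + 2) = a₁ (2, s ^ (j + 2)) := rfl
          rw [hp3, hp2]
          linarith
      calc ∑ j ∈ Finset.range (k - 1),
            (ratio a₁ a₂ (rowVal s (2 * j + 2)) π + ratio a₁ a₂ (rowVal s (2 * j + 3)) π)
          ≤ ∑ j ∈ Finset.range (k - 1),
            ((1 + 1 / s) + (1 - 1 / s) * (p (j + 3) - p (j + 2))) :=
            Finset.sum_le_sum pair_bound
        _ = (k - 1 : ℕ) * (1 + 1 / s) +
            (1 - 1 / s) * ∑ j ∈ Finset.range (k - 1), (p (j + 3) - p (j + 2)) := by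
            rw [Finset.sum_add_distrib, Finset.sum_const, Finset.card_range,
              ← Finset.mul_sum, nsmul_eq_mul]
        _ = ((k : ℝ) - 1) * (1 + 1 / s) + (1 - 1 / s) * (p (k + 1) - p 2) := by
            rw [sum_tele p (k - 1)]
            have h1 : ((k - 1 : ℕ) : ℝ) = (k : ℝ) - 1 := by
              have : (1 : ℕ) ≤ k := by omega
              push_cast [Nat.cast_sub this]; ring
            have h2 : k - 1 + 2 = k + 1 := by omega
            rw [h1, h2]
    rw [hT]
    linarith
  -- assemble
  have hcard : (Finset.univ.filter (fun π : Equiv.Perm (Fin 3) => π 0 = 2)).card = 2 := by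
    decide
  have hsum : ∑ π ∈ Finset.univ.filter (fun π : Equiv.Perm (Fin 3) => π 0 = 2),
      ∑ i ∈ Finset.Icc 1 r, rowProb ε r i * ratio a₁ a₂ (rowVal s i) π ≤ 2 * T := by
    calc ∑ π ∈ Finset.univ.filter (fun π : Equiv.Perm (Fin 3) => π 0 = 2),
        ∑ i ∈ Finset.Icc 1 r, rowProb ε r i * ratio a₁ a₂ (rowVal s i) π
        ≤ ∑ _π ∈ Finset.univ.filter (fun π : Equiv.Perm (Fin 3) => π 0 = 2), T := by
          apply Finset.sum_le_sum
          intro π hπ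
          exact main π (Finset.mem_filter.mp hπ).2
      _ = 2 * T := by rw [Finset.sum_const, hcard, nsmul_eq_mul]; norm_num
  have hcond : condRho s ε r a₁ a₂ 2 ≤ T := by
    rw [condRho, hT]
    rw [hT] at hsum
    linarith
  refine le_trans hcond ?_
  -- final arithmetic: T ≤ RHS
  have hpk : p (k + 1) ≤ 1 := (ha₁ (2, s ^ (k + 1))).2
  have hp2 : 0 ≤ p 2 := (ha₁ (2, s ^ 2)).1
  have h1s : 0 ≤ 1 - 1 / s := by
    rw [sub_nonneg]
    rw [div_le_one hs0]; linarith
  have step1 : T ≤ ε + q * (((k : ℝ) - 1) * (1 + 1 / s) + (1 - 1 / s)) := by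
    rw [hT]
    have : (1 - 1 / s) * (p (k + 1) - p 2) ≤ (1 - 1 / s) := by
      nlinarith
    nlinarith
  refine le_trans step1 (le_of_eq ?_)
  rw [hq, hrcast]
  have hden : 2 * (k : ℝ) - 1 - 1 ≠ 0 := by linarith
  field_simp
  ring
end
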